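/- Let C be a d-dimensional copula, p ∈ (0, 1/2] and a, b ∈ (0,1)^d with a ≤ b such that Q^C([0,a]) = p = Q^C([b,1]). Define C_{(a)}(u) := (1/p)·Q^C([0,u] ∩ [0,a]), C_{(b)}(u) := (1/p)·Q^C([0,u] ∩ [b,1]), C_{(1)}(u) := (C_{(a)}(u) + C_{(b)}(u))/2, and C_{(2)}(u) := (1/2)·(C_{(a)}(η_1(1,u))·C_{(b)}(η_1(u,1)) + C_{(b)}(η_1(1,u))·C_{(a)}(η_1(u,1))). Then D := C − 2p·C_{(1)} + 2p·C_{(2)} is a d-dimensional copula satisfying D ⪯ C and D ≠ C; in particular, C is not a minimal copula. -/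

import Mathlib

open MeasureTheory unitInterval

/-- The unit cube `[0,1]^d`, modelled as functions `Fin d → [0,1]`. -/
abbrev Cube (d : ℕ) : Type := Fin d → unitInterval

/-- `η_K(u,v)`: the vector whose `k`-th coordinate is `v k` if `k ∈ K` and `u k` otherwise. -/
def etaK {d : ℕ} (K : Finset (Fin d)) (u v : Cube d) : Cube d :=
  fun k => if k ∈ K then v k else u k

/-- `C` is a `d`-dimensional copula. -/
def IsCopula {d : ℕ} (C : Cube d → ℝ) : Prop :=
  (∀ u v : Cube d, u ≤ v →
      0 ≤ ∑ K : Finset (Fin d), (-1 : ℝ) ^ (d - K.card) * C (etaK K u v)) ∧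
  (∀ k : Fin d, ∀ u : Cube d, C (etaK {k} u 0) = 0) ∧
  (∀ k : Fin d, ∀ u : Cube d, C (etaK {k} 1 u) = (u k : ℝ))

/-- The reflection `ν_K`, i.e. the composition of the commuting reflections `ν_k`, `k ∈ K`,
written in closed (inclusion–exclusion) form: the coordinates in `L ⊆ K` are reflected to
`1 - u k`, the remaining coordinates of `K` are set to `1`. -/
noncomputable def nuK {d : ℕ} (K : Finset (Fin d)) (C : Cube d → ℝ) : Cube d → ℝ :=
  fun u => ∑ L ∈ K.powerset, (-1 : ℝ) ^ L.card *
    C (fun k => if k ∈ L then unitInterval.symm (u k) else if k ∈ K then 1 else u k)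

/-- The total reflection `τ = ν_{{1,...,d}}`, sending a copula to its survival copula. -/
noncomputable def survival {d : ℕ} (C : Cube d → ℝ) : Cube d → ℝ := nuK Finset.univ C

/-- The concordance order `C ⪯ D`: `C(u) ≤ D(u)` and `(τ C)(u) ≤ (τ D)(u)` for all `u`. -/
def ConcLE {d : ℕ} (C D : Cube d → ℝ) : Prop :=
  (∀ u, C u ≤ D u) ∧ (∀ u, survival C u ≤ survival D u)

/-- A minimal copula: a minimal element of the set of all copulas w.r.t. concordance order. -/
def IsMinimalCopula {d : ℕ} (C : Cube d → ℝ) : Prop :=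
  IsCopula C ∧ ∀ D : Cube d → ℝ, IsCopula D → ConcLE D C → D = C

/-- `μ` is the copula measure `Q^C` of `C`: a Borel probability measure on the cube
with `μ [0,u] = C u` for all `u`. -/
def IsCopulaMeasure {d : ℕ} (C : Cube d → ℝ) (μ : Measure (Cube d)) : Prop :=
  IsProbabilityMeasure μ ∧ ∀ u : Cube d, μ (Set.Icc 0 u) = ENNReal.ofReal (C u)

/-- `C` is `K`-countermonotonic: there are strictly increasing continuous functions
`g k : [0,1] → ℝ` (`k ∈ K`) and `c : ℝ` with `Q^C {u : ∑ k ∈ K, g k (u k) = c} = 1`. -/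
def IsKCM {d : ℕ} (K : Finset (Fin d)) (C : Cube d → ℝ) : Prop :=
  ∃ (g : Fin d → unitInterval → ℝ) (c : ℝ),
    (∀ k ∈ K, StrictMono (g k) ∧ Continuous (g k)) ∧
    ∃ μ : Measure (Cube d), IsCopulaMeasure C μ ∧
      μ {u : Cube d | ∑ k ∈ K, g k (u k) = c} = 1

/-- `C` is Kendall-countermonotonic (`τ`-CM):
`min (C u) ((τ C)(1 - u)) = 0` for every `u` with `0 < u < 1` coordinatewise. -/
noncomputable def IsTauCM {d : ℕ} (C : Cube d → ℝ) : Prop :=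
  ∀ u : Cube d, (∀ k, 0 < u k ∧ u k < 1) →
    min (C u) (survival C (fun k => unitInterval.symm (u k))) = 0

/-- The upper Fréchet–Hoeffding bound `M(u) = min {u_1, ..., u_d}`. -/
noncomputable def Mcop {d : ℕ} : Cube d → ℝ :=
  fun u => sInf (Set.range fun k => (u k : ℝ))

/-!
The mass `p` that `Q^C` puts on `A = [0,a]` and on `B = [b,1]` is removed and replaced by two
product measures of mass `p` each: one takes the first coordinate from `Q^C` on `A` and the
others from `Q^C` on `B`, the other vice versa. The `d`-increments of `D` are therefore those of
`C`, minus the masses of the box in the (essentially disjoint) sets `A` and `B`, plus nonnegative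
product terms, so `D` is a copula. Since `a ≤ b`, a lower set meeting `B` contains `A` and an
upper set meeting `A` contains `B`. For a lower orthant or an upper box, split as `X ∩ R` into
its first coordinate and the others, this gives
`Q(X∩A) Q(R∩B) + Q(X∩B) Q(R∩A) ≤ p (Q(X∩R∩A) + Q(X∩R∩B))`, i.e. `D ≤ C` and `τ(D) ≤ τ(C)`.
At `u = a` the removed mass is `p`, while all product terms vanish because coordinate
hyperplanes are `Q^C`-null.
-/

open Finset

section Increment

variable {d : ℕ}

lemma etaK_empty (u v : Cube d) : etaK ∅ u v = u := by
  funext i; simp [etaK]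

lemma etaK_self (K : Finset (Fin d)) (u : Cube d) : etaK K u u = u := by
  funext i; simp [etaK]

lemma etaK_insert (j : Fin d) (K : Finset (Fin d)) (u v : Cube d) :
    etaK (insert j K) u v = etaK {j} (etaK K u v) v := by
  funext i; by_cases hi : i = j <;> simp [etaK, hi]

lemma etaK_singleton_of_notMem {j : Fin d} {K : Finset (Fin d)} (hj : j ∉ K) (u v : Cube d) :
    etaK {j} (etaK K u v) u = etaK K u v := by
  funext i; by_cases hi : i = j <;> simp [etaK, hi, hj]

lemma etaK_etaK_right (K : Finset (Fin d)) (w x v : Cube d) :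
    etaK K w (etaK K x v) = etaK K w v := by
  funext i; by_cases hi : i ∈ K <;> simp [etaK, hi]

lemma etaK_etaK_left (K : Finset (Fin d)) (x v w : Cube d) :
    etaK K (etaK K x v) w = etaK K x w := by
  funext i; by_cases hi : i ∈ K <;> simp [etaK, hi]

noncomputable def increment (s : Finset (Fin d)) (u v : Cube d) : (Cube d → ℝ) →ₗ[ℝ] ℝ where
  toFun F := ∑ K ∈ s.powerset, (-1 : ℝ) ^ (s.card - K.card) * F (etaK K u v)
  map_add' F G := by simp only [Pi.add_apply, mul_add, sum_add_distrib]
  map_smul' c F := by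
    simp only [Pi.smul_apply, smul_eq_mul, RingHom.id_apply, mul_sum]
    exact sum_congr rfl fun _ _ => by ring

lemma increment_apply (s : Finset (Fin d)) (u v : Cube d) (F : Cube d → ℝ) :
    increment s u v F = ∑ K ∈ s.powerset, (-1 : ℝ) ^ (s.card - K.card) * F (etaK K u v) :=
  rfl

lemma increment_univ (u v : Cube d) (F : Cube d → ℝ) :
    increment univ u v F = ∑ K : Finset (Fin d), (-1 : ℝ) ^ (d - K.card) * F (etaK K u v) := by
  rw [increment_apply, powerset_univ, card_univ, Fintype.card_fin]

lemma increment_empty (u v : Cube d) (F : Cube d → ℝ) : increment ∅ u v F = F u := by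
  simp [increment_apply, etaK_empty]

lemma increment_insert {j : Fin d} {s : Finset (Fin d)} (hj : j ∉ s) (u v : Cube d)
    (F : Cube d → ℝ) :
    increment (insert j s) u v F =
      increment s u v (fun x => F (etaK {j} x v) - F (etaK {j} x u)) := by
  rw [increment_apply, sum_powerset_insert hj, ← sum_add_distrib, increment_apply]
  refine sum_congr rfl fun K hK => ?_
  have hKs := mem_powerset.1 hK
  have hjK : j ∉ K := fun h => hj (hKs h)
  have hsign : (-1 : ℝ) ^ (s.card + 1 - K.card) = -(-1 : ℝ) ^ (s.card - K.card) := by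
    rw [Nat.succ_sub (card_le_card hKs), pow_succ]; ring
  rw [card_insert_of_notMem hj, card_insert_of_notMem hjK, Nat.add_sub_add_right, hsign,
    etaK_insert, etaK_singleton_of_notMem hjK]
  ring

lemma increment_singleton (j : Fin d) (u v : Cube d) (F : Cube d → ℝ) :
    increment {j} u v F = F (etaK {j} u v) - F u := by
  rw [← insert_empty, increment_insert (notMem_empty j), increment_empty, etaK_self,
    insert_empty]

def glue (k : Fin d) (F G : Cube d → ℝ) (x : Cube d) : ℝ :=
  F (etaK {k} 1 x) * G (etaK {k} x 1)

lemma increment_glue {k : Fin d} {s : Finset (Fin d)} (hk : k ∉ s) (u v : Cube d)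
    (F G : Cube d → ℝ) :
    increment (insert k s) u v (glue k F G) =
      increment {k} u v (fun x => F (etaK {k} 1 x)) *
        increment s u v (fun x => G (etaK {k} x 1)) := by
  have hslice : (fun x => glue k F G (etaK {k} x v) - glue k F G (etaK {k} x u)) =
      (F (etaK {k} 1 v) - F (etaK {k} 1 u)) • fun x => G (etaK {k} x 1) := by
    funext x
    simp only [glue, etaK_etaK_right, etaK_etaK_left, Pi.smul_apply, smul_eq_mul]
    ring
  rw [increment_insert hk, hslice, map_smul, smul_eq_mul, increment_singleton, etaK_etaK_right]

end Increment

section Boxes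

variable {d : ℕ}

def lowerOrthant (s : Finset (Fin d)) (x : Cube d) : Set (Cube d) :=
  {w | ∀ i ∈ s, w i ≤ x i}

def boxIoc (s : Finset (Fin d)) (u v : Cube d) : Set (Cube d) :=
  {w | ∀ i ∈ s, u i < w i ∧ w i ≤ v i}

lemma measurableSet_lowerOrthant (s : Finset (Fin d)) (x : Cube d) :
    MeasurableSet (lowerOrthant s x) := by
  simp only [lowerOrthant, Set.ofPred_forall]
  exact .iInter fun i => .iInter fun _ => measurableSet_le (measurable_pi_apply i) measurable_const

lemma measurableSet_boxIoc (s : Finset (Fin d)) (u v : Cube d) :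
    MeasurableSet (boxIoc s u v) := by
  simp only [boxIoc, Set.ofPred_forall, Set.ofPred_and]
  exact .iInter fun i => .iInter fun _ =>
    (measurableSet_lt measurable_const (measurable_pi_apply i)).inter
      (measurableSet_le (measurable_pi_apply i) measurable_const)

lemma lowerOrthant_insert (j : Fin d) (s : Finset (Fin d)) (x : Cube d) :
    lowerOrthant (insert j s) x = lowerOrthant {j} x ∩ lowerOrthant s x := by
  ext w; simp [lowerOrthant]

lemma boxIoc_insert (j : Fin d) (s : Finset (Fin d)) (u v : Cube d) :
    boxIoc (insert j s) u v = boxIoc {j} u v ∩ boxIoc s u v := by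
  ext w; simp [boxIoc]

lemma lowerOrthant_singleton (j : Fin d) (x : Cube d) :
    lowerOrthant {j} x = {w | w j ≤ x j} := by
  ext w; simp [lowerOrthant]

lemma lowerOrthant_etaK_of_notMem {j : Fin d} {s : Finset (Fin d)} (hj : j ∉ s) (x y : Cube d) :
    lowerOrthant s (etaK {j} x y) = lowerOrthant s x := by
  ext w
  simp only [lowerOrthant, Set.mem_ofPred_eq]
  refine forall₂_congr fun i hi => ?_
  rw [etaK, if_neg (by rintro h; rw [mem_singleton.1 h] at hi; exact hj hi)]

lemma lowerOrthant_etaK_self (K : Finset (Fin d)) (x y : Cube d) :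
    lowerOrthant K (etaK K x y) = lowerOrthant K y := by
  ext w
  simp only [lowerOrthant, Set.mem_ofPred_eq]
  exact forall₂_congr fun i hi => by rw [etaK, if_pos hi]

lemma lowerOrthant_univ (K : Finset (Fin d)) (x : Cube d) :
    lowerOrthant univ x = lowerOrthant K x ∩ lowerOrthant Kᶜ x := by
  ext w
  simp only [lowerOrthant, Set.mem_ofPred_eq, Set.mem_inter_iff, mem_univ, mem_compl,
    forall_const]
  exact ⟨fun h => ⟨fun i _ => h i, fun i _ => h i⟩,
    fun h i => by by_cases hi : i ∈ K; exacts [h.1 i hi, h.2 i hi]⟩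

lemma boxIoc_univ (K : Finset (Fin d)) (u v : Cube d) :
    boxIoc univ u v = boxIoc K u v ∩ boxIoc Kᶜ u v := by
  ext w
  simp only [boxIoc, Set.mem_ofPred_eq, Set.mem_inter_iff, mem_univ, mem_compl, forall_const]
  exact ⟨fun h => ⟨fun i _ => h i, fun i _ => h i⟩,
    fun h i => by by_cases hi : i ∈ K; exacts [h.1 i hi, h.2 i hi]⟩

lemma Icc_zero_eq_lowerOrthant (x : Cube d) : Set.Icc 0 x = lowerOrthant univ x := by
  ext w; simp [lowerOrthant, Pi.le_def]

lemma Icc_zero_etaK_one_left (K : Finset (Fin d)) (x : Cube d) :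
    Set.Icc 0 (etaK K 1 x) = lowerOrthant K x := by
  ext w
  simp only [Icc_zero_eq_lowerOrthant, lowerOrthant, etaK, Set.mem_ofPred_eq, mem_univ,
    forall_const]
  exact ⟨fun h i hi => by simpa [hi] using h i,
    fun h i => by by_cases hi : i ∈ K <;> simp [hi, h, unitInterval.le_one']⟩

lemma Icc_zero_etaK_one_right (K : Finset (Fin d)) (x : Cube d) :
    Set.Icc 0 (etaK K x 1) = lowerOrthant Kᶜ x := by
  ext w
  simp only [Icc_zero_eq_lowerOrthant, lowerOrthant, etaK, Set.mem_ofPred_eq, mem_univ,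
    mem_compl, forall_const]
  exact ⟨fun h i hi => by simpa [hi] using h i,
    fun h i => by by_cases hi : i ∈ K <;> simp [hi, h, unitInterval.le_one']⟩

lemma isLowerSet_lowerOrthant (s : Finset (Fin d)) (x : Cube d) :
    IsLowerSet (lowerOrthant s x) :=
  fun _ _ hyw hw i hi => (hyw i).trans (hw i hi)

lemma isUpperSet_boxIoc_one (s : Finset (Fin d)) (u : Cube d) :
    IsUpperSet (boxIoc s u 1) :=
  fun _ _ hwy hw i hi => ⟨(hw i hi).1.trans_le (hwy i), unitInterval.le_one'⟩

lemma increment_measureReal_lowerOrthant (ν : Measure (Cube d)) [IsFiniteMeasure ν]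
    (s : Finset (Fin d)) {u v : Cube d} (huv : u ≤ v) :
    increment s u v (fun x => ν.real (lowerOrthant s x)) = ν.real (boxIoc s u v) := by
  induction s using Finset.induction_on generalizing ν with
  | empty => simp [increment_empty, lowerOrthant, boxIoc]
  | insert j s hj ih =>
    have hslice : ∀ x, ν.real (lowerOrthant (insert j s) (etaK {j} x v)) -
        ν.real (lowerOrthant (insert j s) (etaK {j} x u)) =
          (ν.restrict (boxIoc {j} u v)).real (lowerOrthant s x) := by
      intro x
      have hsub : lowerOrthant {j} u ∩ lowerOrthant s x ⊆ lowerOrthant {j} v ∩ lowerOrthant s x :=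
        Set.inter_subset_inter_left _ fun w hw i hi => le_trans (hw i hi) (huv i)
      have hdiff : (lowerOrthant {j} v ∩ lowerOrthant s x) \ (lowerOrthant {j} u ∩ lowerOrthant s x)
          = lowerOrthant s x ∩ boxIoc {j} u v := by
        ext w
        simp only [lowerOrthant, boxIoc, mem_singleton, forall_eq, Set.mem_sdiff,
          Set.mem_inter_iff, Set.mem_ofPred_eq, not_and]
        exact ⟨fun ⟨⟨hv, hx⟩, hu⟩ => ⟨hx, lt_of_not_ge fun h => hu h hx, hv⟩,
          fun ⟨hx, hu, hv⟩ => ⟨⟨hv, hx⟩, fun h => absurd h (not_le.2 hu)⟩⟩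
      rw [lowerOrthant_insert, lowerOrthant_insert, lowerOrthant_etaK_self, lowerOrthant_etaK_self,
        lowerOrthant_etaK_of_notMem hj, lowerOrthant_etaK_of_notMem hj,
        measureReal_restrict_apply (measurableSet_lowerOrthant s x), ← hdiff,
        measureReal_sdiff hsub ((measurableSet_lowerOrthant _ _).inter
          (measurableSet_lowerOrthant s x))]
    rw [increment_insert hj, funext hslice, ih,
      measureReal_restrict_apply' (measurableSet_boxIoc _ _ _), boxIoc_insert, Set.inter_comm]

end Boxes

lemma IsLowerSet.disjoint_Icc_or_Icc_subset {α : Type*} [Preorder α] {X : Set α}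
    (hX : IsLowerSet X) {a b : α} (hab : a ≤ b) (z c : α) :
    Disjoint X (Set.Icc b c) ∨ Set.Icc z a ⊆ X := by
  refine or_iff_not_imp_left.2 fun h => ?_
  obtain ⟨w, hwX, hwB⟩ := Set.not_disjoint_iff.1 h
  exact fun y hy => hX (hy.2.trans (hab.trans hwB.1)) hwX

lemma IsUpperSet.disjoint_Icc_or_Icc_subset {α : Type*} [Preorder α] {X : Set α}
    (hX : IsUpperSet X) {a b : α} (hab : a ≤ b) (z c : α) :
    Disjoint X (Set.Icc z a) ∨ Set.Icc b c ⊆ X := by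
  refine or_iff_not_imp_left.2 fun h => ?_
  obtain ⟨w, hwX, hwA⟩ := Set.not_disjoint_iff.1 h
  exact fun y hy => hX (hwA.2.trans (hab.trans hy.1)) hwX

section Mass

variable {Ω : Type*} [MeasurableSpace Ω] {μ : Measure Ω} [IsFiniteMeasure μ]

lemma measureReal_inter_add_inter_le {A B : Set Ω} (hB : MeasurableSet B) (hAB : μ (A ∩ B) = 0)
    (T : Set Ω) : μ.real (T ∩ A) + μ.real (T ∩ B) ≤ μ.real T := by
  have hsplitA := measureReal_inter_add_sdiff (μ := μ) (s := T ∩ A) hB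
  have hsplitT := measureReal_inter_add_sdiff (μ := μ) (s := T) hB
  have hnull : μ.real (T ∩ A ∩ B) = 0 := by
    rw [measureReal_def,
      measure_mono_null (Set.inter_subset_inter_left B Set.inter_subset_right) hAB,
      ENNReal.toReal_zero]
  have hmono : μ.real ((T ∩ A) \ B) ≤ μ.real (T \ B) :=
    measureReal_mono (Set.sdiff_subset_sdiff_left Set.inter_subset_left)
  linarith

lemma cross_mass_le {A B X R : Set Ω} {p : ℝ} (hA : μ.real A = p) (hB : μ.real B = p)
    (hBm : MeasurableSet B) (hRm : MeasurableSet R)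
    (hX : Disjoint X B ∨ A ⊆ X) (hR : Disjoint R B ∨ A ⊆ R) :
    μ.real (X ∩ A) * μ.real (R ∩ B) + μ.real (X ∩ B) * μ.real (R ∩ A) ≤
      p * (μ.real (X ∩ R ∩ A) + μ.real (X ∩ R ∩ B)) := by
  have hleB : ∀ Z, μ.real (Z ∩ B) ≤ p := fun Z => hB ▸ measureReal_mono Set.inter_subset_right
  have hnn : ∀ Z : Set Ω, 0 ≤ μ.real Z := fun _ => measureReal_nonneg
  have hp : 0 ≤ p := hB ▸ hnn B
  rcases hX with hX | hX <;> rcases hR with hR | hR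
  · rw [hX.inter_eq, hR.inter_eq]
    simp only [measureReal_empty, mul_zero, zero_mul, add_zero]
    exact mul_nonneg hp (add_nonneg (hnn _) (hnn _))
  · have hXRA : X ∩ R ∩ A = X ∩ A := by rw [Set.inter_assoc, Set.inter_eq_right.2 hR]
    rw [hX.inter_eq, hXRA]
    simp only [measureReal_empty, zero_mul, add_zero]
    nlinarith [hleB R, hnn (X ∩ A), hnn (X ∩ R ∩ B)]
  · have hXRA : X ∩ R ∩ A = R ∩ A := by
      rw [Set.inter_right_comm, Set.inter_eq_right.2 hX, Set.inter_comm]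
    have hXRB : X ∩ R ∩ B = ∅ := by rw [Set.inter_assoc, hR.inter_eq, Set.inter_empty]
    rw [hR.inter_eq, hXRA, hXRB]
    simp only [measureReal_empty, mul_zero, zero_add, add_zero]
    nlinarith [hleB X, hnn (R ∩ A)]
  · have hXRA : X ∩ R ∩ A = A := by
      rw [Set.inter_assoc, Set.inter_eq_right.2 hR, Set.inter_eq_right.2 hX]
    have hunion := measureReal_union_add_inter (μ := μ) (s := X ∩ B) (hRm.inter hBm)
    rw [Set.inter_inter_inter_comm, Set.inter_self, ← Set.union_inter_distrib_right] at hunion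
    rw [Set.inter_eq_right.2 hX, Set.inter_eq_right.2 hR, hXRA, hA]
    nlinarith [hleB (X ∪ R)]

end Mass

section CopulaMeasure

variable {d : ℕ} {C : Cube d → ℝ} {μ : Measure (Cube d)}

lemma IsCopula.apply_eq_zero (hC : IsCopula C) {x : Cube d} {k : Fin d} (hx : x k = 0) :
    C x = 0 := by
  have hfix : etaK {k} x 0 = x := by
    funext i; by_cases hi : i = k <;> simp [etaK, hi, hx]
  simpa [hfix] using hC.2.1 k x

lemma IsCopula.nonneg (hC : IsCopula C) (x : Cube d) : 0 ≤ C x := by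
  have hinc := hC.1 0 x fun _ => unitInterval.nonneg'
  rw [← increment_univ, increment_apply,
    sum_eq_single_of_mem univ (mem_powerset.2 subset_rfl)] at hinc
  · have hfix : etaK univ 0 x = x := by funext i; simp [etaK]
    simpa [hfix] using hinc
  · intro K _ hK
    obtain ⟨k, hk⟩ : ∃ k, k ∉ K := by simpa [eq_univ_iff_forall] using hK
    rw [hC.apply_eq_zero (k := k) (by simp [etaK, hk]), mul_zero]

lemma IsCopulaMeasure.measureReal_Icc (hμ : IsCopulaMeasure C μ) (hC : IsCopula C)
    (x : Cube d) : μ.real (Set.Icc 0 x) = C x := by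
  rw [measureReal_def, hμ.2 x, ENNReal.toReal_ofReal (hC.nonneg x)]

lemma IsCopulaMeasure.measure_coord_le (hμ : IsCopulaMeasure C μ) (hC : IsCopula C) (k : Fin d)
    (t : unitInterval) : μ {w | w k ≤ t} = ENNReal.ofReal t := by
  have h := hμ.2 (etaK {k} 1 fun _ => t)
  rwa [Icc_zero_etaK_one_left, lowerOrthant_singleton, hC.2.2] at h

lemma IsCopulaMeasure.map_eval (hμ : IsCopulaMeasure C μ) (hC : IsCopula C) (k : Fin d) :
    μ.map (fun w => w k) = volume := by
  have := hμ.1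
  refine Measure.ext_of_Iic _ _ fun t => ?_
  rw [Measure.map_apply (measurable_pi_apply k) measurableSet_Iic, unitInterval.volume_Iic]
  exact hμ.measure_coord_le hC k t

lemma IsCopulaMeasure.measure_coord_eq (hμ : IsCopulaMeasure C μ) (hC : IsCopula C) (k : Fin d)
    (c : unitInterval) : μ {w | w k = c} = 0 := by
  have h : μ.map (fun w => w k) {c} = volume {c} := by rw [hμ.map_eval hC k]
  rwa [Measure.map_apply (measurable_pi_apply k) (measurableSet_singleton c),
    measure_singleton] at h

lemma IsCopulaMeasure.measure_lowerOrthant_inter_Icc (hμ : IsCopulaMeasure C μ)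
    (hC : IsCopula C) {s : Finset (Fin d)} {j : Fin d} (hj : j ∈ s) {a b : Cube d}
    (hab : a j ≤ b j) : μ (lowerOrthant s a ∩ Set.Icc b 1) = 0 :=
  measure_mono_null (fun _ hw => le_antisymm ((hw.1 j hj).trans hab) (hw.2.1 j))
    (hμ.measure_coord_eq hC j (b j))

end CopulaMeasure

section BlockSwap

variable {d : ℕ}

noncomputable def lowerCDF (μ : Measure (Cube d)) (S : Set (Cube d)) (x : Cube d) : ℝ :=
  μ.real (Set.Icc 0 x ∩ S)

/-- For `A = [0,a]` and `B = [b,1]` we have `lowerCDF μ A = p • C_(a)` and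
`lowerCDF μ B = p • C_(b)`, so that, with `k` the first coordinate, this is
`C - 2p • C_(1) + 2p • C_(2)`. -/
noncomputable def blockSwap (C : Cube d → ℝ) (μ : Measure (Cube d)) (p : ℝ)
    (A B : Set (Cube d)) (k : Fin d) : Cube d → ℝ :=
  C - lowerCDF μ A - lowerCDF μ B +
    p⁻¹ • (glue k (lowerCDF μ A) (lowerCDF μ B) + glue k (lowerCDF μ B) (lowerCDF μ A))

lemma blockSwap_apply (C : Cube d → ℝ) (μ : Measure (Cube d)) (p : ℝ) (A B : Set (Cube d))
    (k : Fin d) (x : Cube d) :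
    blockSwap C μ p A B k x = C x - lowerCDF μ A x - lowerCDF μ B x +
      p⁻¹ * (glue k (lowerCDF μ A) (lowerCDF μ B) x + glue k (lowerCDF μ B) (lowerCDF μ A) x) :=
  rfl

lemma lowerCDF_one (μ : Measure (Cube d)) (S : Set (Cube d)) : lowerCDF μ S 1 = μ.real S := by
  have huniv : lowerOrthant univ (1 : Cube d) = Set.univ :=
    Set.eq_univ_of_forall fun _ _ _ => unitInterval.le_one'
  rw [lowerCDF, Icc_zero_eq_lowerOrthant, huniv, Set.univ_inter]

lemma glue_lowerCDF (μ : Measure (Cube d)) (k : Fin d) (A B : Set (Cube d)) (x : Cube d) :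
    glue k (lowerCDF μ A) (lowerCDF μ B) x =
      μ.real (lowerOrthant {k} x ∩ A) * μ.real (lowerOrthant {k}ᶜ x ∩ B) := by
  rw [glue, lowerCDF, lowerCDF, Icc_zero_etaK_one_left, Icc_zero_etaK_one_right]

variable {μ : Measure (Cube d)} [IsFiniteMeasure μ] {u v : Cube d}

lemma increment_lowerCDF (S : Set (Cube d)) (huv : u ≤ v) :
    increment univ u v (lowerCDF μ S) = μ.real (boxIoc univ u v ∩ S) := by
  have hrestrict : lowerCDF μ S = fun x => (μ.restrict S).real (lowerOrthant univ x) :=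
    funext fun x => by
      rw [measureReal_restrict_apply (measurableSet_lowerOrthant _ _), ← Icc_zero_eq_lowerOrthant,
        lowerCDF]
  rw [hrestrict, increment_measureReal_lowerOrthant _ _ huv,
    measureReal_restrict_apply (measurableSet_boxIoc _ _ _)]

lemma increment_glue_lowerCDF (k : Fin d) (A B : Set (Cube d)) (huv : u ≤ v) :
    increment univ u v (glue k (lowerCDF μ A) (lowerCDF μ B)) =
      μ.real (boxIoc {k} u v ∩ A) * μ.real (boxIoc {k}ᶜ u v ∩ B) := by
  have h := increment_glue (notMem_compl.2 (mem_singleton_self k)) u v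
    (lowerCDF μ A) (lowerCDF μ B)
  have hA : (fun x => lowerCDF μ A (etaK {k} 1 x)) =
      fun x => (μ.restrict A).real (lowerOrthant {k} x) :=
    funext fun x => by
      rw [lowerCDF, Icc_zero_etaK_one_left,
        measureReal_restrict_apply (measurableSet_lowerOrthant _ _)]
  have hB : (fun x => lowerCDF μ B (etaK {k} x 1)) =
      fun x => (μ.restrict B).real (lowerOrthant {k}ᶜ x) :=
    funext fun x => by
      rw [lowerCDF, Icc_zero_etaK_one_right,
        measureReal_restrict_apply (measurableSet_lowerOrthant _ _)]
  rw [insert_compl_self] at h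
  rw [h, hA, hB, increment_measureReal_lowerOrthant _ _ huv,
    increment_measureReal_lowerOrthant _ _ huv,
    measureReal_restrict_apply (measurableSet_boxIoc _ _ _),
    measureReal_restrict_apply (measurableSet_boxIoc _ _ _)]

lemma increment_blockSwap (C : Cube d → ℝ) (p : ℝ) (A B : Set (Cube d)) (k : Fin d)
    (huv : u ≤ v) :
    increment univ u v (blockSwap C μ p A B k) =
      increment univ u v C - μ.real (boxIoc univ u v ∩ A) - μ.real (boxIoc univ u v ∩ B) +
        p⁻¹ * (μ.real (boxIoc {k} u v ∩ A) * μ.real (boxIoc {k}ᶜ u v ∩ B) +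
          μ.real (boxIoc {k} u v ∩ B) * μ.real (boxIoc {k}ᶜ u v ∩ A)) := by
  simp only [blockSwap, map_add, map_sub, map_smul, smul_eq_mul, increment_lowerCDF _ huv,
    increment_glue_lowerCDF _ _ _ huv]

end BlockSwap

lemma survival_eq_increment {d : ℕ} (G : Cube d → ℝ) (u : Cube d) :
    survival G u = increment univ (fun k => σ (u k)) 1 G := by
  rw [increment_univ, survival, nuK, powerset_univ]
  refine Fintype.sum_bijective compl (compl_involutive).bijective _ _ fun L => ?_
  have hcard : d - Lᶜ.card = L.card := by
    rw [card_compl, Fintype.card_fin, Nat.sub_sub_self (card_le_univ L |>.trans_eq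
      (Fintype.card_fin d))]
  rw [hcard]
  congr 2
  funext k
  by_cases hk : k ∈ L <;> simp [etaK, hk]

lemma glue_eq_zero {d : ℕ} {F G : Cube d → ℝ} {j : Fin d} (hF : ∀ y : Cube d, y j = 0 → F y = 0)
    (hG : ∀ y : Cube d, y j = 0 → G y = 0) (k : Fin d) {x : Cube d} (hx : x j = 0) :
    glue k F G x = 0 := by
  by_cases hjk : j = k
  · subst hjk
    rw [glue, hF _ (by simp [etaK, hx]), zero_mul]
  · rw [glue, hG _ (by simp [etaK, hjk, hx]), mul_zero]

lemma glue_add_glue_etaK_one {d : ℕ} (F G : Cube d → ℝ) (k j : Fin d) (x : Cube d) :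
    glue k F G (etaK {j} 1 x) + glue k G F (etaK {j} 1 x) =
      F (etaK {j} 1 x) * G 1 + G (etaK {j} 1 x) * F 1 := by
  by_cases hjk : j = k
  · subst hjk
    simp only [glue, etaK_etaK_right, etaK_etaK_left, etaK_self]
  · have h1 : etaK {k} 1 (etaK {j} 1 x) = 1 := by
      funext i
      by_cases hi : i = k
      · subst hi; simp [etaK, Ne.symm hjk]
      · simp [etaK, hi]
    have h2 : etaK {k} (etaK {j} 1 x) 1 = etaK {j} 1 x := by
      funext i; by_cases hi : i = k <;> simp [etaK, hi, Ne.symm hjk]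
    rw [glue, glue, h1, h2]
    ring

section Main

variable {d : ℕ} {C : Cube d → ℝ} {μ : Measure (Cube d)} {p : ℝ} {a b : Cube d}

theorem IsCopula.blockSwap (hC : IsCopula C) (hμ : IsCopulaMeasure C μ) {A B : Set (Cube d)}
    (hBm : MeasurableSet B) (hAB : μ (A ∩ B) = 0) (hA : μ.real A = p) (hB : μ.real B = p)
    (hp : 0 < p) (k : Fin d) : IsCopula (blockSwap C μ p A B k) := by
  have := hμ.1
  have hzero : ∀ (S : Set (Cube d)) (j : Fin d) (y : Cube d), y j = 0 → lowerCDF μ S y = 0 := by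
    intro S j y hy
    rw [lowerCDF, measureReal_def,
      measure_mono_null (t := {w : Cube d | w j ≤ y j}) (fun _ hw => hw.1.2 j)
        (by rw [hμ.measure_coord_le hC, hy, Set.Icc.coe_zero, ENNReal.ofReal_zero]),
      ENNReal.toReal_zero]
  refine ⟨fun u v huv => ?_, fun j x => ?_, fun j x => ?_⟩
  · have hCμ : C = lowerCDF μ Set.univ :=
      funext fun x => by rw [lowerCDF, Set.inter_univ, hμ.measureReal_Icc hC]
    have hsplit := measureReal_inter_add_inter_le hBm hAB (boxIoc univ u v)
    have hcross : 0 ≤ p⁻¹ * (μ.real (boxIoc {k} u v ∩ A) * μ.real (boxIoc {k}ᶜ u v ∩ B) +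
        μ.real (boxIoc {k} u v ∩ B) * μ.real (boxIoc {k}ᶜ u v ∩ A)) := by positivity
    rw [← increment_univ, increment_blockSwap _ _ _ _ _ huv, hCμ, increment_lowerCDF _ huv,
      Set.inter_univ]
    linarith
  · have hx : etaK {j} x 0 j = 0 := by simp [etaK]
    rw [blockSwap_apply, hC.apply_eq_zero hx, hzero A j _ hx, hzero B j _ hx,
      glue_eq_zero (hzero A j) (hzero B j) k hx, glue_eq_zero (hzero B j) (hzero A j) k hx]
    ring
  · rw [blockSwap_apply, glue_add_glue_etaK_one, lowerCDF_one, lowerCDF_one, hA, hB, hC.2.2]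
    field_simp
    ring

lemma blockSwap_apply_ne (hμ : IsCopulaMeasure C μ) (hC : IsCopula C) (hab : a ≤ b)
    (hpa : μ.real (Set.Icc 0 a) = p) (hp : 0 < p) {j k : Fin d} (hjk : j ≠ k) :
    blockSwap C μ p (Set.Icc 0 a) (Set.Icc b 1) k a ≠ C a := by
  have hnull : ∀ s : Finset (Fin d), ∀ i ∈ s, μ.real (lowerOrthant s a ∩ Set.Icc b 1) = 0 :=
    fun s i hi => by
      rw [measureReal_def, hμ.measure_lowerOrthant_inter_Icc hC hi (hab i), ENNReal.toReal_zero]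
  have hB : lowerCDF μ (Set.Icc b 1) a = 0 := by
    rw [lowerCDF, Icc_zero_eq_lowerOrthant, hnull univ k (mem_univ k)]
  rw [blockSwap_apply, glue_lowerCDF, glue_lowerCDF, hB, lowerCDF, Set.inter_self, hpa,
    hnull {k}ᶜ j (mem_compl.2 (by simpa using hjk)), hnull {k} k (mem_singleton_self k)]
  simpa using hp.ne'

variable [IsFiniteMeasure μ]

lemma blockSwap_le (hab : a ≤ b) (hpa : μ.real (Set.Icc 0 a) = p)
    (hpb : μ.real (Set.Icc b 1) = p) (hp : 0 < p) (k : Fin d) (x : Cube d) :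
    blockSwap C μ p (Set.Icc 0 a) (Set.Icc b 1) k x ≤ C x := by
  have key := cross_mass_le hpa hpb measurableSet_Icc (measurableSet_lowerOrthant {k}ᶜ x)
    ((isLowerSet_lowerOrthant {k} x).disjoint_Icc_or_Icc_subset hab 0 1)
    ((isLowerSet_lowerOrthant {k}ᶜ x).disjoint_Icc_or_Icc_subset hab 0 1)
  rw [← lowerOrthant_univ, ← Icc_zero_eq_lowerOrthant, ← mul_le_mul_iff_right₀ (inv_pos.2 hp),
    ← mul_assoc, inv_mul_cancel₀ hp.ne', one_mul] at key
  rw [blockSwap_apply, glue_lowerCDF, glue_lowerCDF, lowerCDF, lowerCDF]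
  linarith

lemma survival_blockSwap_le (hab : a ≤ b) (hpa : μ.real (Set.Icc 0 a) = p)
    (hpb : μ.real (Set.Icc b 1) = p) (hp : 0 < p) (k : Fin d) (u : Cube d) :
    survival (blockSwap C μ p (Set.Icc 0 a) (Set.Icc b 1) k) u ≤ survival C u := by
  set s : Cube d := fun k => σ (u k)
  have key := cross_mass_le hpb hpa measurableSet_Icc (measurableSet_boxIoc {k}ᶜ s 1)
    ((isUpperSet_boxIoc_one {k} s).disjoint_Icc_or_Icc_subset hab 0 1)
    ((isUpperSet_boxIoc_one {k}ᶜ s).disjoint_Icc_or_Icc_subset hab 0 1)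
  rw [← boxIoc_univ, ← mul_le_mul_iff_right₀ (inv_pos.2 hp), ← mul_assoc,
    inv_mul_cancel₀ hp.ne', one_mul] at key
  rw [survival_eq_increment, survival_eq_increment,
    increment_blockSwap _ _ _ _ _ (show s ≤ 1 from fun _ => unitInterval.le_one')]
  linarith

end Main

/-- The key construction behind the main theorem: from `p ∈ (0,1/2]`, `a ≤ b` in the open
cube with `Q^C [0,a] = p = Q^C [b,1]`, the function
`D = C - 2p·C_{(1,a,b)} + 2p·C_{(2,a,b)}` is a copula with `D ⪯ C` and `D ≠ C`;
in particular `C` is not a minimal copula. -/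
theorem stmt19 (d : ℕ) (hd : 2 ≤ d) (C : Cube d → ℝ) (hC : IsCopula C)
    (μ : Measure (Cube d)) (hμ : IsCopulaMeasure C μ)
    (p : ℝ) (hp : p ∈ Set.Ioc (0 : ℝ) (1 / 2))
    (a b : Cube d) (hab : a ≤ b)
    (hpa : μ (Set.Icc 0 a) = ENNReal.ofReal p) (hpb : μ (Set.Icc b 1) = ENNReal.ofReal p)
    (Ca Cb C1 C2 D : Cube d → ℝ)
    (hCa : ∀ u : Cube d, Ca u = (1 / p) * (μ (Set.Icc 0 u ∩ Set.Icc 0 a)).toReal)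
    (hCb : ∀ u : Cube d, Cb u = (1 / p) * (μ (Set.Icc 0 u ∩ Set.Icc b 1)).toReal)
    (hC1 : ∀ u : Cube d, C1 u = (Ca u + Cb u) / 2)
    (hC2 : ∀ u : Cube d, C2 u =
      (Ca (etaK {(⟨0, by omega⟩ : Fin d)} 1 u) * Cb (etaK {(⟨0, by omega⟩ : Fin d)} u 1) +
       Cb (etaK {(⟨0, by omega⟩ : Fin d)} 1 u) * Ca (etaK {(⟨0, by omega⟩ : Fin d)} u 1)) / 2)
    (hD : ∀ u : Cube d, D u = C u - 2 * p * C1 u + 2 * p * C2 u) :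
    IsCopula D ∧ ConcLE D C ∧ D ≠ C ∧ ¬ IsMinimalCopula C := by
  have := hμ.1
  set k : Fin d := ⟨0, by omega⟩
  have hp0 : 0 < p := hp.1
  have hpa' : μ.real (Set.Icc 0 a) = p := by rw [measureReal_def, hpa, ENNReal.toReal_ofReal hp0.le]
  have hpb' : μ.real (Set.Icc b 1) = p := by rw [measureReal_def, hpb, ENNReal.toReal_ofReal hp0.le]
  have hDeq : D = blockSwap C μ p (Set.Icc 0 a) (Set.Icc b 1) k := by
    funext u
    rw [hD, hC1, hC2, blockSwap_apply]
    simp only [hCa, hCb, glue, lowerCDF, measureReal_def]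
    field_simp
    ring
  have hAB : μ (Set.Icc 0 a ∩ Set.Icc b 1) = 0 := by
    rw [Icc_zero_eq_lowerOrthant]
    exact hμ.measure_lowerOrthant_inter_Icc hC (mem_univ k) (hab k)
  have hcop : IsCopula D := by
    rw [hDeq]; exact hC.blockSwap hμ measurableSet_Icc hAB hpa' hpb' hp0 k
  have hle : ConcLE D C := by
    rw [hDeq]
    exact ⟨blockSwap_le hab hpa' hpb' hp0 k, survival_blockSwap_le hab hpa' hpb' hp0 k⟩
  have hne : D ≠ C := fun h => blockSwap_apply_ne hμ hC hab hpa' hp0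
    (j := ⟨1, by omega⟩) (Fin.ne_of_val_ne one_ne_zero) (hDeq ▸ congrFun h a)
  exact ⟨hcop, hle, hne, fun hmin => hne (hmin.2 D hcop hle)⟩
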